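/- In the one-factor model with no regressors, if y_{ih} = λ_i f_h + u_{ih}, E(λ_i u_{ij}) = 0, E(u_{ih} u_{ij}) = 0 for h in the instrument set B and j in A₀ ∪ A_J, and f_h is a constant, then E(y_{ih}·v_{ij}) = 0 where v_{ij} = u_{ij} − θ_j·ū_{iA_J} and ū_{iA_J} is an average of u_{ik} over k in A_J (with B ∩ A_J = ∅). That is, the internally generated instrument y_{ih} is uncorrelated with the composite error v_{ij}. -/

import Mathlib

open MeasureTheory Finset

/-! The instrument `y_h = λ f_h + u_h` is orthogonal in `L²` to every `u_k` with
`k ∈ A₀ ∪ A_J`, because both `λ` and `u_h` are; and `v_j` is a linear combination of such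
`u_k`, so the orthogonality passes to it by linearity of the integral. -/

section

variable {Ω ι : Type*} [MeasurableSpace Ω] {μ : Measure Ω}

lemma integral_mul_const_add_mul_eq {X Y Z : Ω → ℝ} (c : ℝ)
    (hXZ : Integrable (fun ω => X ω * Z ω) μ) (hYZ : Integrable (fun ω => Y ω * Z ω) μ) :
    ∫ ω, (X ω * c + Y ω) * Z ω ∂μ = c * ∫ ω, X ω * Z ω ∂μ + ∫ ω, Y ω * Z ω ∂μ := by
  have hsplit : (fun ω => (X ω * c + Y ω) * Z ω) = fun ω => c * (X ω * Z ω) + Y ω * Z ω := by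
    funext ω
    ring
  rw [hsplit, integral_add (hXZ.const_mul c) hYZ, integral_const_mul]

lemma integral_mul_finset_sum {Y : Ω → ℝ} {Z : ι → Ω → ℝ} (A : Finset ι)
    (hYZ : ∀ k ∈ A, Integrable (fun ω => Y ω * Z k ω) μ) :
    ∫ ω, Y ω * ∑ k ∈ A, Z k ω ∂μ = ∑ k ∈ A, ∫ ω, Y ω * Z k ω ∂μ := by
  simp_rw [Finset.mul_sum]
  exact integral_finsetSum A hYZ

lemma integral_mul_sub_const_mul_sum_eq_zero {Y : Ω → ℝ} {Z : ι → Ω → ℝ} {s A : Finset ι}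
    {j : ι} (c : ℝ) (hY : MemLp Y 2 μ) (hZ : ∀ k ∈ s, MemLp (Z k) 2 μ)
    (horth : ∀ k ∈ s, ∫ ω, Y ω * Z k ω ∂μ = 0) (hj : j ∈ s) (hA : A ⊆ s) :
    ∫ ω, Y ω * (Z j ω - c * ∑ k ∈ A, Z k ω) ∂μ = 0 := by
  have hYZ : ∀ k ∈ s, Integrable (fun ω => Y ω * Z k ω) μ :=
    fun k hk => hY.integrable_mul (hZ k hk)
  have hYsum : Integrable (fun ω => Y ω * ∑ k ∈ A, Z k ω) μ := by
    simp_rw [Finset.mul_sum]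
    exact integrable_finsetSum A fun k hk => hYZ k (hA hk)
  have hsplit : (fun ω => Y ω * (Z j ω - c * ∑ k ∈ A, Z k ω))
      = fun ω => Y ω * Z j ω - c * (Y ω * ∑ k ∈ A, Z k ω) := by
    funext ω
    ring
  rw [hsplit, integral_sub (hYZ j hj) (hYsum.const_mul c), integral_const_mul,
    integral_mul_finset_sum A fun k hk => hYZ k (hA hk), horth j hj,
    Finset.sum_eq_zero fun k hk => horth k (hA hk), mul_zero, sub_zero]

end

theorem stmt_4_general {Ω : Type*} [MeasurableSpace Ω] (μ : Measure Ω)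
    (lam : Ω → ℝ) (u : ℕ → Ω → ℝ) (f : ℕ → ℝ) (θ : ℕ → ℝ)
    (A0 AJ B : Finset ℕ)
    (hlam : MemLp lam 2 μ) (hu : ∀ k, MemLp (u k) 2 μ)
    (hlamu : ∀ k, ∫ ω, lam ω * u k ω ∂μ = 0)
    (huu : ∀ h ∈ B, ∀ k ∈ A0 ∪ AJ, ∫ ω, u h ω * u k ω ∂μ = 0)
    (h : ℕ) (hhB : h ∈ B) (j : ℕ) (hj : j ∈ A0 ∪ AJ) :
    ∫ ω, (lam ω * f h + u h ω) *
        (u j ω - θ j * ((AJ.card : ℝ)⁻¹ * ∑ k ∈ AJ, u k ω)) ∂μ = 0 := by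
  have hy : MemLp (fun ω => lam ω * f h + u h ω) 2 μ := (hlam.mul_const (f h)).add (hu h)
  have horth : ∀ k ∈ A0 ∪ AJ, ∫ ω, (lam ω * f h + u h ω) * u k ω ∂μ = 0 := fun k hk => by
    rw [integral_mul_const_add_mul_eq (f h) (hlam.integrable_mul (hu k))
      ((hu h).integrable_mul (hu k)), hlamu k, huu h hhB k hk, mul_zero, add_zero]
  simpa only [mul_assoc] using integral_mul_sub_const_mul_sum_eq_zero (θ j * (AJ.card : ℝ)⁻¹)
    hy (fun k _ => hu k) horth hj subset_union_right

/-- In the one-factor model with no regressors, the internally generated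
instrument `y_{ih} = λ f_h + u_{ih}` (for `h` in the instrument set `B`) is
uncorrelated with the composite error `v_{ij} = u_{ij} - θ_j ū_{iA_J}`
(for `j ∈ A₀ ∪ A_J`). -/
theorem stmt_4 {Ω : Type*} [MeasurableSpace Ω] (μ : Measure Ω) [IsProbabilityMeasure μ]
    (J : ℕ) (lam : Ω → ℝ) (u : ℕ → Ω → ℝ) (f : ℕ → ℝ) (θ : ℕ → ℝ)
    (A0 AJ B : Finset ℕ)
    (hA0AJ : Disjoint A0 AJ) (hA0B : Disjoint A0 B) (hAJB : Disjoint AJ B)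
    (hAJne : AJ.Nonempty)
    (hlam : MemLp lam 2 μ) (hu : ∀ k, MemLp (u k) 2 μ)
    (hlamu : ∀ k, ∫ ω, lam ω * u k ω ∂μ = 0)
    (huu : ∀ h ∈ B, ∀ k ∈ A0 ∪ AJ, ∫ ω, u h ω * u k ω ∂μ = 0)
    (h : ℕ) (hhB : h ∈ B) (j : ℕ) (hj : j ∈ A0 ∪ AJ) :
    ∫ ω, (lam ω * f h + u h ω) *
        (u j ω - θ j * ((AJ.card : ℝ)⁻¹ * ∑ k ∈ AJ, u k ω)) ∂μ = 0 :=
  stmt_4_general μ lam u f θ A0 AJ B hlam hu hlamu huu h hhB j hj
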